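/- Let R be an alternative ring with a nontrivial idempotent e₁ satisfying conditions (i) and (ii), let n ≥ 2 be an integer and let D : R → R be a multiplicative Lie n-derivation. Then for i ≠ j in {1,2} and all a, b ∈ R_ij one has D(a + b) = D(a) + D(b). -/

import Mathlib

/-- The commutative center of a (possibly non-associative, non-unital) ring. -/
def rctr (R : Type*) [NonUnitalNonAssocRing R] : Set R := {z | ∀ x, z * x = x * z}

/-- `R` is an alternative ring. -/
def IsAlt (R : Type*) [NonUnitalNonAssocRing R] : Prop :=
  ∀ x y : R, (x * x) * y = x * (x * y) ∧ (y * x) * x = y * (x * x)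

/-- Peirce components relative to an idempotent `e`. -/
def P11 {R : Type*} [NonUnitalNonAssocRing R] (e : R) : Set R := {x | e * x = x ∧ x * e = x}
def P12 {R : Type*} [NonUnitalNonAssocRing R] (e : R) : Set R := {x | e * x = x ∧ x * e = 0}
def P21 {R : Type*} [NonUnitalNonAssocRing R] (e : R) : Set R := {x | e * x = 0 ∧ x * e = x}
def P22 {R : Type*} [NonUnitalNonAssocRing R] (e : R) : Set R := {x | e * x = 0 ∧ x * e = 0}

/-- The iterated commutator `p_n`: `p_1(x) = x`,
`p_n(x_1,…,x_n) = [p_{n-1}(x_1,…,x_{n-1}), x_n]`. -/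
def pn {R : Type*} [NonUnitalNonAssocRing R] : (n : ℕ) → (Fin n → R) → R
  | 0, _ => 0
  | 1, x => x 0
  | (m+2), x =>
      pn (m+1) (fun i => x i.castSucc) * x (Fin.last (m+1))
        - x (Fin.last (m+1)) * pn (m+1) (fun i => x i.castSucc)

/-- A (not necessarily additive) map `D` is a multiplicative Lie `n`-derivation. -/
def IsMultLieNDeriv {R : Type*} [NonUnitalNonAssocRing R] (n : ℕ) (D : R → R) : Prop :=
  ∀ x : Fin n → R, D (pn n x) = ∑ i : Fin n, pn n (Function.update x i (D (x i)))

/-!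
Write `ad x = x e - e x`, `T(u, v) = p_n(u, v, e, …, e) = ad^{n-2} [u, v]` and
`Δ(u, v) = D(u + v) - D u - D v`. In the Lie derivation rule for `T(u, v)` the terms in which `D`
hits an `e` depend additively on `[u, v]`, so `Δ(T(u, v), T(u', v)) = T(Δ(u, u'), v)`, and likewise
in the second slot. In an alternative ring `ad³ = ad`, `ad` is `-1` on `R₁₂` and `1` on `R₂₁`, and
its kernel `C` contains `R₁₁ + R₂₂`. Taking `v = e` shows `Δ(u, t) ∈ C` for `t ∈ C`. Expanding the
rule at `u = e + w` gives `Δ(R₁₂, R₂₁) ⊆ (R₁₂ + C) ∩ (R₂₁ + C) = C`; as `ad^{n-1}` is bijective on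
`R₁₂` and `R₂₁` and kills `C`, `Δ` vanishes on `R₁₂ × R₂₁`. A last expansion at `u = e + w` with
`w ∈ Rᵢⱼ` turns this into `Δ(Rᵢⱼ, Rᵢⱼ) = 0`.
-/

section

variable {R : Type*} [NonUnitalNonAssocRing R]

def ad (e : R) : AddMonoid.End R := AddMonoidHom.mulRight e - AddMonoidHom.mulLeft e

theorem ad_apply (e x : R) : ad e x = x * e - e * x := rfl

theorem ad_self (e : R) : ad e e = 0 := sub_self _

theorem ad_pow_succ_apply (e x : R) (j : ℕ) : (ad e ^ (j + 1)) x = (ad e ^ j) (ad e x) := by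
  rw [pow_succ]; rfl

theorem ad_ad_pow_apply (e x : R) (j : ℕ) : ad e ((ad e ^ j) x) = (ad e ^ j) (ad e x) := by
  rw [← ad_pow_succ_apply, pow_succ']; rfl

def adTail : (k : ℕ) → (Fin k → R) → AddMonoid.End R
  | 0, _ => 1
  | k + 1, z => ad (z (Fin.last k)) * adTail k (Fin.init z)

theorem adTail_const (e : R) (k : ℕ) : adTail k (fun _ => e) = ad e ^ k := by
  induction k with
  | zero => rfl
  | succ k ih => rw [pow_succ', ← ih]; rfl

theorem pn_snoc (m : ℕ) (y : Fin (m + 1) → R) (b : R) :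
    pn (m + 2) (Fin.snoc y b) = pn (m + 1) y * b - b * pn (m + 1) y := by
  simp [pn]

theorem pn_cons_cons (k : ℕ) (u v : R) (z : Fin k → R) :
    pn (k + 2) (Fin.cons u (Fin.cons v z)) = adTail k z (u * v - v * u) := by
  induction k with
  | zero => rfl
  | succ k ih =>
    rw [← Fin.snoc_init_self z, Fin.cons_snoc_eq_snoc_cons, Fin.cons_snoc_eq_snoc_cons,
      pn_snoc, ih]
    simp [adTail, ad_apply]

/-- `adComm e k u v = p_{k+2}(u, v, e, …, e)`. -/
def adComm (e : R) (k : ℕ) : R →+ R →+ R :=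
  AddMonoidHom.compr₂ (AddMonoidHom.mul - AddMonoidHom.mul.flip) (ad e ^ k)

theorem adComm_apply (e : R) (k : ℕ) (u v : R) : adComm e k u v = (ad e ^ k) (u * v - v * u) :=
  rfl

theorem adComm_swap (e : R) (k : ℕ) (u v : R) : adComm e k u v = -adComm e k v u := by
  rw [adComm_apply, adComm_apply, ← map_neg, neg_sub]

theorem adComm_apply_right_self (e : R) (k : ℕ) (u : R) :
    adComm e k u e = (ad e ^ (k + 1)) u := by
  rw [adComm_apply, ad_pow_succ_apply, ad_apply]

theorem adComm_apply_left_self (e : R) (k : ℕ) (u : R) :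
    adComm e k e u = -(ad e ^ (k + 1)) u := by
  rw [adComm_swap, adComm_apply_right_self]

def addDefect (D : R → R) (u v : R) : R := D (u + v) - D u - D v

theorem addDefect_eq_zero_iff (D : R → R) (u v : R) :
    addDefect D u v = 0 ↔ D (u + v) = D u + D v := by
  rw [addDefect, sub_sub, sub_eq_zero]

theorem addDefect_comm (D : R → R) (u v : R) : addDefect D u v = addDefect D v u := by
  simp only [addDefect, add_comm u v]; abel

theorem addDefect_add_right (D : R → R) (u v t : R) :
    addDefect D u (v + t) = addDefect D u v + addDefect D (u + v) t - addDefect D v t := by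
  simp only [addDefect, add_assoc]; abel

namespace IsMultLieNDeriv

variable {D : R → R} {k : ℕ}

/-- The terms of the rule in which `D` hits one of the `e`'s form an additive function of
`[u, v]`. -/
theorem exists_map_adComm (hD : IsMultLieNDeriv (k + 2) D) (e : R) :
    ∃ Ψ : AddMonoid.End R, ∀ u v, D (adComm e k u v) =
      adComm e k (D u) v + adComm e k u (D v) + Ψ (u * v - v * u) := by
  refine ⟨∑ j, adTail k (Function.update (fun _ => e) j (D e)), fun u v => ?_⟩
  have h := hD (Fin.cons u (Fin.cons v fun _ => e))
  simp only [Fin.sum_univ_succ, Fin.update_cons_zero, ← Fin.cons_update, Fin.cons_zero,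
    Fin.cons_succ, pn_cons_cons, adTail_const] at h
  rw [adComm_apply, h, adComm_apply, adComm_apply, add_assoc]
  congr 2
  exact (AddMonoidHom.finsetSum_apply _ _ _).symm

theorem apply_zero (hD : IsMultLieNDeriv (k + 2) D) : D 0 = 0 := by
  obtain ⟨Ψ, hΨ⟩ := hD.exists_map_adComm 0
  simpa using hΨ 0 0

theorem addDefect_adComm_left (hD : IsMultLieNDeriv (k + 2) D) (e u u' v : R) :
    addDefect D (adComm e k u v) (adComm e k u' v) = adComm e k (addDefect D u u') v := by
  obtain ⟨Ψ, hΨ⟩ := hD.exists_map_adComm e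
  rw [addDefect, addDefect, ← AddMonoidHom.add_apply, ← map_add, hΨ, hΨ, hΨ]
  simp only [map_add, map_sub, AddMonoidHom.add_apply, AddMonoidHom.sub_apply, add_mul, mul_add]
  abel

theorem addDefect_adComm_right (hD : IsMultLieNDeriv (k + 2) D) (e u v v' : R) :
    addDefect D (adComm e k u v) (adComm e k u v') = adComm e k u (addDefect D v v') := by
  obtain ⟨Ψ, hΨ⟩ := hD.exists_map_adComm e
  rw [addDefect, addDefect, ← map_add, hΨ, hΨ, hΨ]
  simp only [map_add, map_sub, add_mul, mul_add]
  abel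

theorem addDefect_ad_pow (hD : IsMultLieNDeriv (k + 2) D) (e u u' : R) :
    addDefect D ((ad e ^ (k + 1)) u) ((ad e ^ (k + 1)) u') =
      (ad e ^ (k + 1)) (addDefect D u u') := by
  simpa only [adComm_apply_right_self] using hD.addDefect_adComm_left e u u' e

end IsMultLieNDeriv

def peirceSpace (e : R) (a b : ℤ) : AddSubgroup R where
  carrier := {x | e * x = a • x ∧ x * e = b • x}
  add_mem' hx hy := ⟨by rw [mul_add, hx.1, hy.1, smul_add], by rw [add_mul, hx.2, hy.2, smul_add]⟩
  zero_mem' := ⟨by rw [mul_zero, smul_zero], by rw [zero_mul, smul_zero]⟩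
  neg_mem' hx := ⟨by rw [mul_neg, hx.1, smul_neg], by rw [neg_mul, hx.2, smul_neg]⟩

theorem mem_peirceSpace {e x : R} {a b : ℤ} :
    x ∈ peirceSpace e a b ↔ e * x = a • x ∧ x * e = b • x :=
  Iff.rfl

theorem mem_peirceSpace_one_zero {e x : R} : x ∈ peirceSpace e 1 0 ↔ x ∈ P12 e := by
  simp [mem_peirceSpace, P12]

theorem mem_peirceSpace_zero_one {e x : R} : x ∈ peirceSpace e 0 1 ↔ x ∈ P21 e := by
  simp [mem_peirceSpace, P21]

theorem eq_zero_of_mem_peirceSpace_one_zero_of_mem_zero_one {e x : R}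
    (h₁ : x ∈ peirceSpace e 1 0) (h₂ : x ∈ peirceSpace e 0 1) : x = 0 := by
  simpa [h₂.1] using h₁.1.symm

namespace IsAlt

variable (halt : IsAlt R)
include halt

theorem left_linearized (x y z : R) : x * y * z + y * x * z = x * (y * z) + y * (x * z) := by
  have h := (halt (x + y) z).1
  simp only [add_mul, mul_add, (halt x z).1, (halt y z).1] at h
  rw [← sub_eq_zero, ← sub_eq_zero.mpr h]
  abel

theorem right_linearized (x y z : R) : z * x * y + z * y * x = z * (x * y) + z * (y * x) := by
  have h := (halt (x + y) z).2
  simp only [add_mul, mul_add, (halt x z).2, (halt y z).2] at h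
  rw [← sub_eq_zero, ← sub_eq_zero.mpr h]
  abel

theorem flexible (x y : R) : x * y * x = x * (y * x) := by
  have h := halt.left_linearized x y x
  rwa [(halt x y).2, add_left_inj] at h

theorem mul_mem_peirceSpace {e x y : R} {a b c d : ℤ} (hx : x ∈ peirceSpace e a b)
    (hy : y ∈ peirceSpace e c d) : x * y ∈ peirceSpace e (a + b - c) (c + d - b) := by
  have hl := halt.left_linearized e x y
  have hr := halt.right_linearized e y x
  rw [hx.1, hx.2, hy.1, smul_mul_assoc, smul_mul_assoc, mul_smul_comm] at hl
  rw [hx.2, hy.1, hy.2, smul_mul_assoc, mul_smul_comm, mul_smul_comm] at hr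
  constructor
  · rw [sub_smul, add_smul, hl, add_sub_cancel_right]
  · rw [sub_smul, add_smul, ← hr, add_sub_cancel_left]

theorem commutator_mem_peirceSpace_zero_one {e a b : R} (ha : a ∈ peirceSpace e 1 0)
    (hb : b ∈ peirceSpace e 1 0) : a * b - b * a ∈ peirceSpace e 0 1 :=
  sub_mem (by simpa using halt.mul_mem_peirceSpace ha hb)
    (by simpa using halt.mul_mem_peirceSpace hb ha)

theorem commutator_mem_peirceSpace_one_zero {e a b : R} (ha : a ∈ peirceSpace e 0 1)
    (hb : b ∈ peirceSpace e 0 1) : a * b - b * a ∈ peirceSpace e 1 0 :=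
  sub_mem (by simpa using halt.mul_mem_peirceSpace ha hb)
    (by simpa using halt.mul_mem_peirceSpace hb ha)

variable {e : R} (he : e * e = e)
include he

theorem idem_mul_idem_mul (x : R) : e * (e * x) = e * x := by
  rw [← (halt e x).1, he]

theorem mul_idem_mul_idem (x : R) : x * e * e = x * e := by
  rw [(halt e x).2, he]

theorem ad_pow_three : ad e ^ 3 = ad e := by
  ext x
  have hmid (y : R) : e * (y * e) = e * y * e := (halt.flexible e y).symm
  simp only [pow_succ, pow_zero, one_mul, AddMonoid.End.coe_mul, Function.comp_apply, ad_apply,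
    sub_mul, mul_sub, halt.idem_mul_idem_mul he, halt.mul_idem_mul_idem he, hmid]
  abel

theorem ad_eq_zero_of_ad_pow_eq_zero {x : R} (k : ℕ) (hx : (ad e ^ (k + 1)) x = 0) :
    ad e x = 0 := by
  have hodd (j : ℕ) : ad e ^ (2 * j + 1) = ad e := by
    induction j with
    | zero => rfl
    | succ j ih => rw [show 2 * (j + 1) + 1 = 2 * j + 1 + 2 by ring, pow_add, ih, ← pow_succ',
        halt.ad_pow_three he]
  rw [← hodd k, show 2 * k + 1 = k + (k + 1) by ring, pow_add, AddMonoid.End.coe_mul,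
    Function.comp_apply, hx, map_zero]

/-- Idempotence of `e` gives `(a² - a) x = 0 = (b² - b) x`. -/
theorem ad_eq_zero_of_mem_peirceSpace {x : R} {a b : ℤ}
    (hab : a * a - a ∣ b - a ∨ b * b - b ∣ b - a) (hx : x ∈ peirceSpace e a b) : ad e x = 0 := by
  have hl : (a * a - a) • x = 0 := by
    have h := halt.idem_mul_idem_mul he x
    rw [hx.1, mul_smul_comm, hx.1, smul_smul] at h
    rw [sub_smul, h, sub_self]
  have hr : (b * b - b) • x = 0 := by
    have h := halt.mul_idem_mul_idem he x
    rw [hx.2, smul_mul_assoc, hx.2, smul_smul] at h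
    rw [sub_smul, h, sub_self]
  rw [ad_apply, hx.1, hx.2, ← sub_smul]
  rcases hab with ⟨c, hc⟩ | ⟨c, hc⟩
  · rw [hc, mul_comm, mul_smul, hl, smul_zero]
  · rw [hc, mul_comm, mul_smul, hr, smul_zero]

theorem ad_commutator_eq_zero {m y : R} (hm : m ∈ peirceSpace e 1 0)
    (hy : y ∈ peirceSpace e 0 1) : ad e (m * y - y * m) = 0 := by
  rw [map_sub, halt.ad_eq_zero_of_mem_peirceSpace he (by norm_num) (halt.mul_mem_peirceSpace hm hy),
    halt.ad_eq_zero_of_mem_peirceSpace he (by norm_num) (halt.mul_mem_peirceSpace hy hm), sub_zero]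

theorem mul_mem_peirceSpace_one_one {t : R} (ht : ad e t = 0) : e * t ∈ peirceSpace e 1 1 := by
  rw [ad_apply, sub_eq_zero] at ht
  refine ⟨by rw [halt.idem_mul_idem_mul he, one_smul], ?_⟩
  rw [halt.flexible, ht, halt.idem_mul_idem_mul he, one_smul]

theorem sub_mul_mem_peirceSpace_zero_zero {t : R} (ht : ad e t = 0) :
    t - e * t ∈ peirceSpace e 0 0 := by
  obtain ⟨h₁, h₂⟩ := halt.mul_mem_peirceSpace_one_one he ht
  rw [one_smul] at h₁ h₂
  rw [ad_apply, sub_eq_zero] at ht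
  exact ⟨by rw [mul_sub, h₁, sub_self, zero_smul], by rw [sub_mul, h₂, ht, sub_self, zero_smul]⟩

/-- Split `t = e t + (t - e t)` into its Peirce components in `R₁₁` and `R₂₂`. -/
theorem commutator_mem_sup_ker_of_mem_one_zero {w t : R} (hw : w ∈ peirceSpace e 1 0)
    (ht : ad e t = 0) : w * t - t * w ∈ peirceSpace e 1 0 ⊔ (ad e).ker := by
  have h11 := halt.mul_mem_peirceSpace_one_one he ht
  have h22 := halt.sub_mul_mem_peirceSpace_zero_zero he ht
  have hsplit : w * t - t * w = (w * (t - e * t) - e * t * w) + (w * (e * t) - (t - e * t) * w) := by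
    simp only [mul_sub, sub_mul]; abel
  rw [hsplit]
  refine add_mem (AddSubgroup.mem_sup_left (sub_mem ?_ ?_))
    (AddSubgroup.mem_sup_right (sub_mem ?_ ?_))
  · simpa using halt.mul_mem_peirceSpace hw h22
  · simpa using halt.mul_mem_peirceSpace h11 hw
  · exact halt.ad_eq_zero_of_mem_peirceSpace he (by norm_num) (halt.mul_mem_peirceSpace hw h11)
  · exact halt.ad_eq_zero_of_mem_peirceSpace he (by norm_num) (halt.mul_mem_peirceSpace h22 hw)

theorem commutator_mem_sup_ker_of_mem_zero_one {w t : R} (hw : w ∈ peirceSpace e 0 1)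
    (ht : ad e t = 0) : w * t - t * w ∈ peirceSpace e 0 1 ⊔ (ad e).ker := by
  have h11 := halt.mul_mem_peirceSpace_one_one he ht
  have h22 := halt.sub_mul_mem_peirceSpace_zero_zero he ht
  have hsplit : w * t - t * w = (w * (e * t) - (t - e * t) * w) + (w * (t - e * t) - e * t * w) := by
    simp only [mul_sub, sub_mul]; abel
  rw [hsplit]
  refine add_mem (AddSubgroup.mem_sup_left (sub_mem ?_ ?_))
    (AddSubgroup.mem_sup_right (sub_mem ?_ ?_))
  · simpa using halt.mul_mem_peirceSpace hw h11
  · simpa using halt.mul_mem_peirceSpace h22 hw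
  · exact halt.ad_eq_zero_of_mem_peirceSpace he (by norm_num) (halt.mul_mem_peirceSpace hw h22)
  · exact halt.ad_eq_zero_of_mem_peirceSpace he (by norm_num) (halt.mul_mem_peirceSpace h11 hw)

end IsAlt

def IsAdInvolutive (e : R) (X : AddSubgroup R) : Prop := ∀ a ∈ X, ad e a ∈ X ∧ ad e (ad e a) = a

theorem isAdInvolutive_peirceSpace_one_zero (e : R) : IsAdInvolutive e (peirceSpace e 1 0) := by
  intro a ha
  have had : ad e a = -a := by rw [ad_apply, ha.1, ha.2]; simp
  rw [had, map_neg, had, neg_neg]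
  exact ⟨neg_mem ha, rfl⟩

theorem isAdInvolutive_peirceSpace_zero_one (e : R) : IsAdInvolutive e (peirceSpace e 0 1) := by
  intro a ha
  have had : ad e a = a := by rw [ad_apply, ha.1, ha.2]; simp
  rw [had, had]
  exact ⟨ha, rfl⟩

namespace IsAdInvolutive

variable {e : R} {X : AddSubgroup R} (hX : IsAdInvolutive e X)
include hX

theorem pow_apply_mem {a : R} (ha : a ∈ X) (j : ℕ) : (ad e ^ j) a ∈ X := by
  induction j with
  | zero => exact ha
  | succ j ih => rw [pow_succ', AddMonoid.End.coe_mul, Function.comp_apply]; exact (hX _ ih).1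

theorem pow_apply_pow_apply {a : R} (ha : a ∈ X) (j : ℕ) : (ad e ^ j) ((ad e ^ j) a) = a := by
  induction j with
  | zero => rfl
  | succ j ih =>
    rw [ad_pow_succ_apply, pow_succ', AddMonoid.End.coe_mul, Function.comp_apply,
      (hX _ (hX.pow_apply_mem ha j)).2, ih]

theorem exists_pow_apply_eq {a : R} (ha : a ∈ X) (j : ℕ) : ∃ b ∈ X, (ad e ^ j) b = a :=
  ⟨_, hX.pow_apply_mem ha j, hX.pow_apply_pow_apply ha j⟩

theorem pow_apply_mem_sup_ker {a : R} (ha : a ∈ X ⊔ (ad e).ker) (j : ℕ) :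
    (ad e ^ j) a ∈ X ⊔ (ad e).ker := by
  obtain ⟨x, hx, t, ht : ad e t = 0, rfl⟩ := AddSubgroup.mem_sup.1 ha
  rw [map_add]
  refine add_mem (AddSubgroup.mem_sup_left (hX.pow_apply_mem hx j)) (AddSubgroup.mem_sup_right ?_)
  show ad e ((ad e ^ j) t) = 0
  rw [ad_ad_pow_apply, ht, map_zero]

theorem ad_mem_of_mem_sup_ker {a : R} (ha : a ∈ X ⊔ (ad e).ker) : ad e a ∈ X := by
  obtain ⟨x, hx, t, ht : ad e t = 0, rfl⟩ := AddSubgroup.mem_sup.1 ha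
  rw [map_add, ht, add_zero]
  exact (hX x hx).1

end IsAdInvolutive

namespace IsMultLieNDeriv

variable {D : R → R} {k : ℕ} (hD : IsMultLieNDeriv (k + 2) D) (halt : IsAlt R) {e : R}
  (he : e * e = e)
include hD halt he

theorem ad_addDefect_eq_zero (u : R) {t : R} (ht : ad e t = 0) : ad e (addDefect D u t) = 0 := by
  refine halt.ad_eq_zero_of_ad_pow_eq_zero he k ?_
  rw [← hD.addDefect_ad_pow, ad_pow_succ_apply e t, ht, map_zero, addDefect, add_zero,
    hD.apply_zero, sub_zero, sub_self]

theorem ad_addDefect_self_left_eq_zero (x : R) : ad e (addDefect D e x) = 0 := by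
  rw [addDefect_comm]
  exact hD.ad_addDefect_eq_zero halt he x (ad_self e)

/-- The rule for the pair `p_n(e + w, e, e, …, e)`, `p_n(e + w, x, e, …, e)`. -/
theorem addDefect_ad_pow_adComm (w x : R) :
    addDefect D ((ad e ^ (k + 1)) w) (-(ad e ^ (k + 1)) x + adComm e k w x) =
      adComm e k w (addDefect D e x) := by
  have h := hD.addDefect_adComm_right e (e + w) e x
  simp only [map_add, AddMonoidHom.add_apply, adComm_apply_left_self, adComm_apply_right_self,
    ad_pow_succ_apply e e, ad_pow_succ_apply e (addDefect D e x), ad_self,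
    hD.ad_addDefect_self_left_eq_zero halt he, map_zero, neg_zero, zero_add] at h
  exact h

theorem addDefect_mem_sup_ker {X Y : AddSubgroup R} (hX : IsAdInvolutive e X)
    (hY : IsAdInvolutive e Y) (hXY : ∀ w ∈ X, ∀ x ∈ Y, ad e (w * x - x * w) = 0)
    (hXK : ∀ w ∈ X, ∀ t, ad e t = 0 → w * t - t * w ∈ X ⊔ (ad e).ker)
    {p q : R} (hp : p ∈ X) (hq : q ∈ Y) : addDefect D p q ∈ X ⊔ (ad e).ker := by
  obtain ⟨w, hw, rfl⟩ := hX.exists_pow_apply_eq hp (k + 1)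
  obtain ⟨x, hx, rfl⟩ : ∃ x ∈ Y, -(ad e ^ (k + 1)) x = q := by
    obtain ⟨x, hx, rfl⟩ := hY.exists_pow_apply_eq hq (k + 1)
    exact ⟨-x, neg_mem hx, by rw [map_neg, neg_neg]⟩
  have hc : ad e (adComm e k w x) = 0 := by
    rw [adComm_apply, ad_ad_pow_apply, hXY w hw x hx, map_zero]
  have key := hD.addDefect_ad_pow_adComm halt he w x
  rw [addDefect_add_right] at key
  have hpq : addDefect D ((ad e ^ (k + 1)) w) (-(ad e ^ (k + 1)) x) =
      adComm e k w (addDefect D e x) - addDefect D ((ad e ^ (k + 1)) w + -(ad e ^ (k + 1)) x)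
        (adComm e k w x) + addDefect D (-(ad e ^ (k + 1)) x) (adComm e k w x) := by
    rw [← key]; abel
  rw [hpq]
  refine add_mem (sub_mem ?_ ?_) ?_
  · exact hX.pow_apply_mem_sup_ker (hXK w hw _ (hD.ad_addDefect_self_left_eq_zero halt he x)) k
  · exact AddSubgroup.mem_sup_right (hD.ad_addDefect_eq_zero halt he _ hc)
  · exact AddSubgroup.mem_sup_right (hD.ad_addDefect_eq_zero halt he _ hc)

theorem addDefect_eq_zero_of_mem_peirceSpace {m y : R} (hm : m ∈ peirceSpace e 1 0)
    (hy : y ∈ peirceSpace e 0 1) : addDefect D m y = 0 := by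
  have h12 := isAdInvolutive_peirceSpace_one_zero e
  have h21 := isAdInvolutive_peirceSpace_zero_one e
  obtain ⟨m, hm', rfl⟩ := h12.exists_pow_apply_eq hm (k + 1)
  obtain ⟨y, hy', rfl⟩ := h21.exists_pow_apply_eq hy (k + 1)
  have h₁ : addDefect D m y ∈ peirceSpace e 1 0 ⊔ (ad e).ker :=
    hD.addDefect_mem_sup_ker halt he h12 h21 (fun w hw x hx ↦ halt.ad_commutator_eq_zero he hw hx)
      (fun w hw t ht ↦ halt.commutator_mem_sup_ker_of_mem_one_zero he hw ht) hm' hy'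
  have h₂ : addDefect D y m ∈ peirceSpace e 0 1 ⊔ (ad e).ker :=
    hD.addDefect_mem_sup_ker halt he h21 h12
      (fun w hw x hx ↦ by rw [← neg_sub, map_neg, halt.ad_commutator_eq_zero he hx hw, neg_zero])
      (fun w hw t ht ↦ halt.commutator_mem_sup_ker_of_mem_zero_one he hw ht) hy' hm'
  rw [addDefect_comm] at h₂
  have hK : ad e (addDefect D m y) = 0 :=
    eq_zero_of_mem_peirceSpace_one_zero_of_mem_zero_one (h12.ad_mem_of_mem_sup_ker h₁)
      (h21.ad_mem_of_mem_sup_ker h₂)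
  rw [hD.addDefect_ad_pow, ad_pow_succ_apply, hK, map_zero]

theorem addDefect_eq_zero_of_isAdInvolutive {X Y : AddSubgroup R} (hX : IsAdInvolutive e X)
    (hY : IsAdInvolutive e Y) (hXX : ∀ a ∈ X, ∀ b ∈ X, a * b - b * a ∈ Y)
    (hXY : ∀ p ∈ X, ∀ q ∈ Y, addDefect D p q = 0) {a b : R} (ha : a ∈ X) (hb : b ∈ X) :
    addDefect D a b = 0 := by
  obtain ⟨w, hw, rfl⟩ := hX.exists_pow_apply_eq ha (k + 1)
  obtain ⟨x, hx, rfl⟩ := hX.exists_pow_apply_eq hb (k + 1)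
  have hc : adComm e k w (-x) ∈ Y := hY.pow_apply_mem (hXX w hw _ (neg_mem hx)) k
  have hΘ : adComm e k w (addDefect D e (-x)) = 0 := by
    have h₁ : adComm e k e w ∈ X := by
      rw [adComm_apply_left_self]; exact neg_mem (hX.pow_apply_mem hw _)
    have h₂ : adComm e k (-x) w ∈ Y := hY.pow_apply_mem (hXX _ (neg_mem hx) w hw) k
    have h := hD.addDefect_adComm_left e e (-x) w
    rw [hXY _ h₁ _ h₂] at h
    rw [adComm_swap, ← h, neg_zero]
  have key := hD.addDefect_ad_pow_adComm halt he w (-x)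
  rwa [map_neg, neg_neg, hΘ, addDefect_add_right, hXY _ (add_mem (hX.pow_apply_mem hw _)
    (hX.pow_apply_mem hx _)) _ hc, hXY _ (hX.pow_apply_mem hx _) _ hc, add_zero, sub_zero] at key

end IsMultLieNDeriv

end

theorem stmt3_general {R : Type*} [NonUnitalNonAssocRing R] (halt : IsAlt R)
    (e₁ : R) (he : e₁ * e₁ = e₁)
    (n : ℕ) (hn : 2 ≤ n) (D : R → R) (hD : IsMultLieNDeriv n D) :
    (∀ a ∈ P12 e₁, ∀ b ∈ P12 e₁, D (a + b) = D a + D b) ∧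
    (∀ a ∈ P21 e₁, ∀ b ∈ P21 e₁, D (a + b) = D a + D b) := by
  obtain ⟨k, rfl⟩ : ∃ k, n = k + 2 := ⟨n - 2, by omega⟩
  have h12 := isAdInvolutive_peirceSpace_one_zero e₁
  have h21 := isAdInvolutive_peirceSpace_zero_one e₁
  have hmix (p) (hp : p ∈ peirceSpace e₁ 1 0) (q) (hq : q ∈ peirceSpace e₁ 0 1) :=
    hD.addDefect_eq_zero_of_mem_peirceSpace halt he hp hq
  refine ⟨fun a ha b hb ↦ ?_, fun a ha b hb ↦ ?_⟩ <;> rw [← addDefect_eq_zero_iff]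
  · exact hD.addDefect_eq_zero_of_isAdInvolutive halt he h12 h21
      (fun _ hx _ hy ↦ halt.commutator_mem_peirceSpace_zero_one hx hy) hmix
      (mem_peirceSpace_one_zero.2 ha) (mem_peirceSpace_one_zero.2 hb)
  · exact hD.addDefect_eq_zero_of_isAdInvolutive halt he h21 h12
      (fun _ hx _ hy ↦ halt.commutator_mem_peirceSpace_one_zero hx hy)
      (fun p hp q hq ↦ addDefect_comm D p q ▸ hmix q hq p hp)
      (mem_peirceSpace_zero_one.2 ha) (mem_peirceSpace_zero_one.2 hb)

theorem stmt3 {R : Type*} [NonUnitalNonAssocRing R] (halt : IsAlt R)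
    (e₁ : R) (he : e₁ * e₁ = e₁) (hne : e₁ ≠ 0)
    (hnu : ¬ ∀ x : R, e₁ * x = x ∧ x * e₁ = x)
    (hcondi : ∀ a ∈ P11 e₁, ∀ b ∈ P22 e₁,
      (∀ x ∈ P12 e₁, (a + b) * x = x * (a + b)) → a + b ∈ rctr R)
    (hcondii : ∀ a ∈ P11 e₁, ∀ b ∈ P22 e₁,
      (∀ x ∈ P21 e₁, (a + b) * x = x * (a + b)) → a + b ∈ rctr R)
    (n : ℕ) (hn : 2 ≤ n) (D : R → R) (hD : IsMultLieNDeriv n D) :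
    (∀ a ∈ P12 e₁, ∀ b ∈ P12 e₁, D (a + b) = D a + D b) ∧
    (∀ a ∈ P21 e₁, ∀ b ∈ P21 e₁, D (a + b) = D a + D b) :=
  stmt3_general halt e₁ he n hn D hD
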